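/- arXiv:1204.6618 — 7 statements merged into one kernel-verified Lean document; each statement's English description precedes it below -/
import Mathlib

section
/- For all natural numbers h, k ≥ 0 one has S^{(k)}_{k+h+1} = Σ_{i=0}^{k} α^{2(k−i)} · ( −b_i · S^{(i)}_{i+h} + S^{(i+1)}_{i+h} ). -/
open Finset

theorem eq_sum_pow_mul_of_eq_mul_add {R : Type*} [CommSemiring R] (r : R) (x c : ℕ → R)
    (h_zero : x 0 = c 0) (h_succ : ∀ n, x (n + 1) = r * x n + c (n + 1)) (n : ℕ) :
    x n = ∑ i ∈ range (n + 1), r ^ (n - i) * c i := by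
  induction n with
  | zero => simp [h_zero]
  | succ n ih =>
    have h_shift : ∀ i ∈ range (n + 1), r * (r ^ (n - i) * c i) = r ^ (n + 1 - i) * c i := by
      intro i hi
      rw [← mul_assoc, ← pow_succ', Nat.sub_add_comm (Nat.le_of_lt_succ (mem_range.mp hi))]
    rw [h_succ, ih, mul_sum, sum_congr rfl h_shift, sum_range_succ _ (n + 1), Nat.sub_self,
      pow_zero, one_mul]

theorem stmt_0_general (α : ℝ)
    (b : ℕ → ℝ)
    (S : ℕ → ℕ → ℝ)
    (hS_rec : ∀ k i : ℕ, k ≤ i →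
      S k (i + 1) = α ^ 2 * (if k = 0 then 0 else S (k - 1) i) - b k * S k i + S (k + 1) i) :
    ∀ h k : ℕ, S k (k + h + 1) =
      ∑ i ∈ Finset.range (k + 1),
        α ^ (2 * (k - i)) * (-(b i) * S i (i + h) + S (i + 1) (i + h)) := by
  intro h k
  simp only [pow_mul]
  -- Along the diagonal `k ↦ S k (k + h + 1)` the recurrence is first order in `k`.
  refine eq_sum_pow_mul_of_eq_mul_add (α ^ 2) (fun k => S k (k + h + 1))
    (fun i => -(b i) * S i (i + h) + S (i + 1) (i + h)) ?_ (fun n => ?_) k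
  · simpa [sub_eq_neg_add, neg_mul] using hS_rec 0 h (Nat.zero_le _)
  · have h_rec := hS_rec (n + 1) (n + h + 1) (by omega)
    simp only [Nat.add_sub_cancel, Nat.add_eq_zero_iff, one_ne_zero, and_false, if_false] at h_rec
    simp only [show n + 1 + h = n + h + 1 by omega, h_rec]
    ring

/-- `S^{(k)}_{k+h+1} = ∑_{i=0}^{k} α^{2(k-i)} (−b_i S^{(i)}_{i+h} + S^{(i+1)}_{i+h})`. -/
theorem stmt_0 (α : ℝ) (hα : 0 < α)
    (b : ℕ → ℝ) (hb : ∀ k : ℕ, b k = 1 / ((k : ℝ) + 1) + (k : ℝ) * α ^ 2)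
    (S : ℕ → ℕ → ℝ)
    (hS_zero : ∀ k i : ℕ, i < k → S k i = 0)
    (hS_diag : ∀ k : ℕ, S k k = 1)
    (hS_rec : ∀ k i : ℕ, k ≤ i →
      S k (i + 1) = α ^ 2 * (if k = 0 then 0 else S (k - 1) i) - b k * S k i + S (k + 1) i) :
    ∀ h k : ℕ, S k (k + h + 1) =
      ∑ i ∈ Finset.range (k + 1),
        α ^ (2 * (k - i)) * (-(b i) * S i (i + h) + S (i + 1) (i + h)) :=
  stmt_0_general α b S hS_rec
end

section
/- For all natural numbers i, k with k ≤ i one has (−1)^{i−k}·S^{(k)}_i ≥ 0; equivalently, the quantities L^{(k)}_i = (−1)^{i−k}·α^{−2k}·S^{(k)}_i are nonnegative for all i, k ∈ ℕ. -/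
/-- `(−1)^{i−k} S^{(k)}_i ≥ 0` for `k ≤ i`; equivalently the
`L^{(k)}_i = (−1)^{i−k} α^{−2k} S^{(k)}_i` are nonnegative for all `i, k`. -/
theorem stmt_2 (α : ℝ) (hα : 0 < α)
    (b : ℕ → ℝ) (hb : ∀ k : ℕ, b k = 1 / ((k : ℝ) + 1) + (k : ℝ) * α ^ 2)
    (S : ℕ → ℕ → ℝ)
    (hS_zero : ∀ k i : ℕ, i < k → S k i = 0)
    (hS_diag : ∀ k : ℕ, S k k = 1)
    (hS_rec : ∀ k i : ℕ, k ≤ i →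
      S k (i + 1) = α ^ 2 * (if k = 0 then 0 else S (k - 1) i) - b k * S k i + S (k + 1) i) :
    (∀ i k : ℕ, k ≤ i → 0 ≤ (-1 : ℝ) ^ (i - k) * S k i) ∧
    (∀ i k : ℕ, 0 ≤ (-1 : ℝ) ^ (i - k) * S k i / α ^ (2 * k)) := by
  have key : ∀ i k : ℕ, 0 ≤ (-1 : ℝ) ^ (i - k) * S k i := by
    intro i
    induction i with
    | zero =>
      intro k
      rcases Nat.eq_zero_or_pos k with hk | hk
      · subst hk; simp [hS_diag]
      · rw [hS_zero k 0 hk]; simp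
    | succ i ih =>
      intro k
      rcases lt_trichotomy k (i + 1) with hk | hk | hk
      · have hki : k ≤ i := Nat.lt_succ_iff.mp hk
        rw [hS_rec k i hki]
        have e1 : i + 1 - k = (i - k) + 1 := by omega
        rw [e1, pow_succ]
        have hb' : (0 : ℝ) < b k := by
          rw [hb]; positivity
        have t1 : 0 ≤ (-1 : ℝ) ^ (i - k) * S k i := ih k
        have t2 : 0 ≤ -((-1 : ℝ) ^ (i - k)) * S (k + 1) i := by
          rcases eq_or_lt_of_le hki with h | h
          · rw [hS_zero (k + 1) i (by omega)]; simp
          · have e2 : i - k = (i - (k + 1)) + 1 := by omega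
            have := ih (k + 1)
            rw [e2, pow_succ]
            nlinarith [this]
        have t3 : 0 ≤ -((-1 : ℝ) ^ (i - k)) * (if k = 0 then 0 else S (k - 1) i) := by
          rcases Nat.eq_zero_or_pos k with h | h
          · simp [h]
          · rw [if_neg (by omega)]
            have e3 : i - (k - 1) = (i - k) + 1 := by omega
            have := ih (k - 1)
            rw [e3, pow_succ] at this
            nlinarith [this]
        nlinarith [mul_nonneg hb'.le t1, mul_nonneg (sq_nonneg α) t3, t2]
      · subst hk
        simp [hS_diag]
      · rw [hS_zero k (i + 1) hk]; simp
  refine ⟨fun i k _ => key i k, fun i k => ?_⟩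
  exact div_nonneg (key i k) (pow_nonneg hα.le _)
end

section
/- For every real number τ, the series Σ_{i=0}^{∞} M^{(0)}_i · τ^i / i! converges absolutely; that is, the power series with coefficients M^{(0)}_i / i! has infinite radius of convergence. -/
/-!
Read as a transfer rule, the recurrence says that `M k i` is a weighted count of Motzkin paths of
length `i` from height `0` to height `k`, a level step at height `h` having weight `1 + h`. A path
with `u` down steps has `u + k` up steps and `j = i - 2u - k` level steps, never rises above
`u + k`, and its sequence of step types is one of at most `i! / (u! (u+k)! j!)`; so
`M k i ≤ i! · majorant k i`, which is proved directly by induction via the multinomial Pascal rule.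
For `k = 0` the terms of `x^i · majorant 0 i` factor as `x^{2u}/u!² · ((1+u)x)^j/j!`, and bounding
the second factor by `exp ((1+u)x)` gives `M 0 i · x^i / i! ≤ exp x · exp (x² exp x)` uniformly in
`i`. Taking `x = 2|τ|` dominates the series by a geometric one.
-/

open Finset Real Nat

noncomputable def majorantCoeff (u k j : ℕ) : ℝ :=
  (1 + u + k : ℝ) ^ j / (u ! * (u + k)! * j !)

noncomputable def majorantTerm (k i u : ℕ) : ℝ :=
  if 2 * u + k ≤ i then majorantCoeff u k (i - (2 * u + k)) else 0

noncomputable def majorant (k i : ℕ) : ℝ :=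
  ∑ u ∈ range (i + 1), majorantTerm k i u

lemma majorantCoeff_nonneg (u k j : ℕ) : 0 ≤ majorantCoeff u k j := by
  unfold majorantCoeff; positivity

lemma majorantTerm_nonneg (k i u : ℕ) : 0 ≤ majorantTerm k i u := by
  unfold majorantTerm; split_ifs
  · exact majorantCoeff_nonneg ..
  · exact le_rfl

lemma majorant_nonneg (k i : ℕ) : 0 ≤ majorant k i :=
  sum_nonneg fun u _ => majorantTerm_nonneg k i u

lemma majorantCoeff_le_mul_succ_right (u k j : ℕ) :
    majorantCoeff u k j ≤ (u + k + 1) * majorantCoeff u (k + 1) j := by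
  unfold majorantCoeff
  rw [← add_assoc, factorial_succ]
  push_cast
  rw [mul_div_assoc', div_le_div_iff₀ (by positivity) (by positivity)]
  calc (1 + u + k : ℝ) ^ j * (u ! * ((u + k + 1) * (u + k)!) * j !)
      = (u + k + 1) * ((1 + u + k) ^ j * (u ! * (u + k)! * j !)) := by ring
    _ ≤ (u + k + 1) * ((1 + u + (k + 1)) ^ j * (u ! * (u + k)! * j !)) := by gcongr; linarith
    _ = _ := by ring

lemma one_add_mul_majorantCoeff_le (u k j : ℕ) :
    (1 + k) * majorantCoeff u k j ≤ (j + 1) * majorantCoeff u k (j + 1) := by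
  unfold majorantCoeff
  rw [factorial_succ, pow_succ]
  push_cast
  rw [mul_div_assoc', mul_div_assoc', div_le_div_iff₀ (by positivity) (by positivity)]
  have hk : (1 + k : ℝ) ≤ 1 + u + k := by linarith [(u.cast_nonneg : (0 : ℝ) ≤ u)]
  calc (1 + k : ℝ) * (1 + u + k) ^ j * (u ! * (u + k)! * ((j + 1) * j !))
      = (j + 1) * ((1 + k) * ((1 + u + k) ^ j * (u ! * (u + k)! * j !))) := by ring
    _ ≤ (j + 1) * ((1 + u + k) * ((1 + u + k) ^ j * (u ! * (u + k)! * j !))) := by gcongr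
    _ = _ := by ring

lemma succ_mul_majorantCoeff_succ (u k j : ℕ) :
    (u + 1) * majorantCoeff (u + 1) k j = majorantCoeff u (k + 1) j := by
  unfold majorantCoeff
  rw [factorial_succ, show u + 1 + k = u + (k + 1) by ring, show u + (k + 1) = u + k + 1 by ring]
  push_cast
  field_simp
  ring

lemma majorant_pred_le (k i : ℕ) :
    (if k = 0 then 0 else majorant (k - 1) i) ≤
      ∑ u ∈ range (i + 2), (u + k : ℝ) * majorantTerm k (i + 1) u := by
  have hnonneg : ∀ u ∈ range (i + 2), 0 ≤ (u + k : ℝ) * majorantTerm k (i + 1) u :=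
    fun u _ => mul_nonneg (by positivity) (majorantTerm_nonneg ..)
  rcases k with _ | k
  · exact sum_nonneg hnonneg
  rw [if_neg k.succ_ne_zero, Nat.add_sub_cancel, sum_range_succ]
  refine le_add_of_le_of_nonneg (sum_le_sum fun u _ => ?_) (hnonneg _ (self_mem_range_succ _))
  unfold majorantTerm
  split_ifs with h h'
  · rw [show i + 1 - (2 * u + (k + 1)) = i - (2 * u + k) by omega]
    push_cast
    rw [← add_assoc]
    exact majorantCoeff_le_mul_succ_right u k _
  all_goals first | omega | positivity

lemma one_add_mul_majorant_le (k i : ℕ) :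
    (1 + k) * majorant k i ≤
      ∑ u ∈ range (i + 2), ((i + 1 - (2 * u + k) : ℕ) : ℝ) * majorantTerm k (i + 1) u := by
  rw [majorant, mul_sum, sum_range_succ _ (i + 1)]
  refine le_add_of_le_of_nonneg (sum_le_sum fun u _ => ?_)
    (mul_nonneg (Nat.cast_nonneg _) (majorantTerm_nonneg ..))
  unfold majorantTerm
  split_ifs with h h'
  · rw [show i + 1 - (2 * u + k) = i - (2 * u + k) + 1 by omega]
    push_cast
    exact one_add_mul_majorantCoeff_le u k _
  · omega
  · rw [mul_zero]
    exact mul_nonneg (Nat.cast_nonneg _) (majorantCoeff_nonneg ..)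
  · simp

lemma majorant_succ_left_eq (k i : ℕ) :
    majorant (k + 1) i = ∑ u ∈ range (i + 2), (u : ℝ) * majorantTerm k (i + 1) u := by
  rw [sum_range_succ', majorant]
  simp only [CharP.cast_eq_zero, zero_mul, add_zero]
  refine sum_congr rfl fun u _ => ?_
  unfold majorantTerm
  rw [show 2 * (u + 1) + k = 2 * u + (k + 1) + 1 by ring, Nat.add_sub_add_right]
  split_ifs with h h'
  · push_cast; exact (succ_mul_majorantCoeff_succ u k _).symm
  all_goals first | omega | simp

lemma majorant_succ_ge (k i : ℕ) :
    (if k = 0 then 0 else majorant (k - 1) i) + (1 + k) * majorant k i + majorant (k + 1) i ≤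
      (i + 1) * majorant k (i + 1) := by
  calc _ ≤ ∑ u ∈ range (i + 2), (u + k : ℝ) * majorantTerm k (i + 1) u
          + ∑ u ∈ range (i + 2), ((i + 1 - (2 * u + k) : ℕ) : ℝ) * majorantTerm k (i + 1) u
          + ∑ u ∈ range (i + 2), (u : ℝ) * majorantTerm k (i + 1) u := by
        rw [majorant_succ_left_eq]
        gcongr
        exacts [majorant_pred_le k i, one_add_mul_majorant_le k i]
    _ = (i + 1) * majorant k (i + 1) := by
      rw [← sum_add_distrib, ← sum_add_distrib, majorant, mul_sum]
      refine sum_congr rfl fun u _ => ?_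
      unfold majorantTerm
      split_ifs with h
      · push_cast [h]; ring
      · simp

lemma majorant_zero_zero : majorant 0 0 = 1 := by
  simp [majorant, majorantTerm, majorantCoeff]

section Recurrence

variable {M : ℕ → ℕ → ℝ}

lemma recurrence_of_triangular (hM_zero : ∀ k i : ℕ, i < k → M k i = 0)
    (hM_diag : ∀ k : ℕ, M k k = 1)
    (hM_rec : ∀ k i : ℕ, k ≤ i →
      M k (i + 1) = (if k = 0 then 0 else M (k - 1) i) + (1 + (k : ℝ)) * M k i + M (k + 1) i)
    (k i : ℕ) :
    M k (i + 1) = (if k = 0 then 0 else M (k - 1) i) + (1 + (k : ℝ)) * M k i + M (k + 1) i := by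
  rcases lt_trichotomy k (i + 1) with hk | rfl | hk
  · exact hM_rec k i (by omega)
  · rw [if_neg i.succ_ne_zero, Nat.add_sub_cancel, hM_diag, hM_diag,
      hM_zero (i + 1) i i.lt_succ_self, hM_zero (i + 1 + 1) i (by omega)]
    ring
  · rw [hM_zero k (i + 1) hk, hM_zero k i (by omega), hM_zero (k + 1) i (by omega),
      if_neg (by omega), hM_zero (k - 1) i (by omega)]
    ring

lemma nonneg_of_recurrence (h0 : ∀ k, M k 0 = if k = 0 then 1 else 0)
    (hrec : ∀ k i, M k (i + 1) =
      (if k = 0 then 0 else M (k - 1) i) + (1 + (k : ℝ)) * M k i + M (k + 1) i)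
    (k i : ℕ) : 0 ≤ M k i := by
  induction i generalizing k with
  | zero => rw [h0]; split_ifs <;> norm_num
  | succ i ih =>
    rw [hrec]
    have : 0 ≤ if k = 0 then 0 else M (k - 1) i := by split_ifs <;> simp [ih]
    have := mul_nonneg (by positivity : (0 : ℝ) ≤ 1 + k) (ih k)
    linarith [ih (k + 1)]

lemma le_factorial_mul_majorant (h0 : ∀ k, M k 0 = if k = 0 then 1 else 0)
    (hrec : ∀ k i, M k (i + 1) =
      (if k = 0 then 0 else M (k - 1) i) + (1 + (k : ℝ)) * M k i + M (k + 1) i)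
    (k i : ℕ) : M k i ≤ i ! * majorant k i := by
  induction i generalizing k with
  | zero =>
    rw [h0]
    split_ifs with hk
    · simp [hk, majorant_zero_zero]
    · simpa using majorant_nonneg k 0
  | succ i ih =>
    have hpred : (if k = 0 then 0 else M (k - 1) i) ≤
        i ! * (if k = 0 then 0 else majorant (k - 1) i) := by
      split_ifs
      · simp
      · exact ih _
    calc M k (i + 1)
        ≤ i ! * ((if k = 0 then 0 else majorant (k - 1) i) + (1 + k) * majorant k i
          + majorant (k + 1) i) := by
          rw [hrec, mul_add, mul_add, mul_left_comm]
          gcongr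
          exacts [ih k, ih (k + 1)]
      _ ≤ i ! * ((i + 1) * majorant k (i + 1)) := by gcongr; exact majorant_succ_ge k i
      _ = (i + 1)! * majorant k (i + 1) := by push_cast [factorial_succ]; ring

end Recurrence

lemma pow_mul_majorant_zero_le_exp {x : ℝ} (hx : 0 ≤ x) (i : ℕ) :
    x ^ i * majorant 0 i ≤ exp x * exp (x ^ 2 * exp x) := by
  have hterm : ∀ u, x ^ i * majorantTerm 0 i u ≤ exp x * ((x ^ 2 * exp x) ^ u / u !) := by
    intro u
    unfold majorantTerm majorantCoeff
    split_ifs with h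
    · obtain ⟨j, rfl⟩ : ∃ j, i = 2 * u + j := ⟨i - 2 * u, by omega⟩
      simp only [Nat.cast_zero, add_zero, Nat.add_sub_cancel_left]
      calc x ^ (2 * u + j) * ((1 + u : ℝ) ^ j / (u ! * u ! * j !))
          = (x ^ 2) ^ u / (u ! * u !) * (((1 + u) * x) ^ j / j !) := by
            rw [pow_add, pow_mul, mul_pow]; field_simp
        _ ≤ (x ^ 2) ^ u / u ! * exp ((1 + u) * x) := by
            gcongr
            · exact le_mul_of_one_le_right (by positivity) (by exact_mod_cast u.factorial_pos)
            · exact pow_div_factorial_le_exp _ (by positivity) j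
        _ = exp x * ((x ^ 2 * exp x) ^ u / u !) := by
            rw [add_mul, one_mul, exp_add, exp_nat_mul]; ring
    · rw [mul_zero]; positivity
  calc x ^ i * majorant 0 i
      ≤ ∑ u ∈ range (i + 1), exp x * ((x ^ 2 * exp x) ^ u / u !) := by
        rw [majorant, mul_sum]; exact sum_le_sum fun u _ => hterm u
    _ ≤ exp x * exp (x ^ 2 * exp x) := by
        rw [← mul_sum]; gcongr; exact sum_le_exp_of_nonneg (by positivity) _

/-- the power series `∑ M^{(0)}_i τ^i / i!` converges absolutely for every real `τ`. -/
theorem stmt_4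
    (M : ℕ → ℕ → ℝ)
    (hM_zero : ∀ k i : ℕ, i < k → M k i = 0)
    (hM_diag : ∀ k : ℕ, M k k = 1)
    (hM_rec : ∀ k i : ℕ, k ≤ i →
      M k (i + 1) = (if k = 0 then 0 else M (k - 1) i) + (1 + (k : ℝ)) * M k i + M (k + 1) i) :
    ∀ τ : ℝ, Summable (fun i : ℕ => |M 0 i * τ ^ i / (i.factorial : ℝ)|) := by
  have h0 : ∀ k, M k 0 = if k = 0 then 1 else 0 := fun k => by
    split_ifs with hk
    · rw [hk, hM_diag]
    · exact hM_zero k 0 (Nat.pos_of_ne_zero hk)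
  have hrec := recurrence_of_triangular hM_zero hM_diag hM_rec
  intro τ
  set x := 2 * |τ| with hx_def
  have hx : 0 ≤ x := by positivity
  refine Summable.of_nonneg_of_le (fun _ => abs_nonneg _) (fun i => ?_)
    (summable_geometric_two.mul_left (exp x * exp (x ^ 2 * exp x)))
  have hM : M 0 i / i ! ≤ majorant 0 i :=
    div_le_of_le_mul₀ (by positivity) (majorant_nonneg 0 i)
      (by rw [mul_comm]; exact le_factorial_mul_majorant h0 hrec 0 i)
  calc |M 0 i * τ ^ i / i !|
      = M 0 i / i ! * (x * (1 / 2)) ^ i := by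
        rw [show x * (1 / 2) = |τ| by rw [hx_def]; ring, abs_div, abs_mul, abs_pow,
          abs_of_nonneg (nonneg_of_recurrence h0 hrec 0 i), Nat.abs_cast]
        ring
    _ = M 0 i / i ! * x ^ i * (1 / 2) ^ i := by rw [mul_pow, mul_assoc]
    _ ≤ x ^ i * majorant 0 i * (1 / 2) ^ i := by
        rw [mul_comm (M 0 i / i !)]; gcongr
    _ ≤ exp x * exp (x ^ 2 * exp x) * (1 / 2) ^ i :=
        mul_le_mul_of_nonneg_right (pow_mul_majorant_zero_le_exp hx i) (by positivity)
end

section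
/- For every natural number k and every real number τ, the series Σ_{i=0}^{∞} S^{(k)}_i · τ^i / i! converges absolutely; that is, for each k the power series with coefficients S^{(k)}_i / i! has infinite radius of convergence. -/
/-- Majorant coefficients: `Qaux k i = ∑_{u ≤ (i-k)/2} (k+u+1)^(i-k-2u)` for `k ≤ i`, else 0. -/
def Qaux (k i : ℕ) : ℕ :=
  if k ≤ i then ∑ u ∈ Finset.range ((i - k) / 2 + 1), (k + u + 1) ^ (i - k - 2 * u) else 0

lemma Qaux_self (k : ℕ) : Qaux k k = 1 := by
  simp [Qaux]

lemma Qaux_of_lt {k i : ℕ} (h : i < k) : Qaux k i = 0 := if_neg (by omega)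

lemma QA (k i : ℕ) (h : k ≤ i) : Qaux k i ≤ Qaux (k + 1) (i + 1) := by
  rw [Qaux, Qaux, if_pos h, if_pos (by omega)]
  have hn : i + 1 - (k + 1) = i - k := by omega
  rw [hn]
  exact Finset.sum_le_sum fun u _ => Nat.pow_le_pow_left (by omega) _

lemma QB (k i : ℕ) (h : k ≤ i) : (k + 1) * Qaux k i ≤ Qaux k (i + 1) := by
  rw [Qaux, Qaux, if_pos h, if_pos (by omega)]
  rw [Finset.mul_sum]
  have h2 : (i - k) / 2 + 1 ≤ (i + 1 - k) / 2 + 1 := by omega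
  refine le_trans (Finset.sum_le_sum ?_)
    (Finset.sum_le_sum_of_subset (Finset.range_subset_range.mpr h2))
  intro u hu
  simp only [Finset.mem_range] at hu
  have h3 : i + 1 - k - 2 * u = (i - k - 2 * u) + 1 := by omega
  rw [h3, pow_succ]
  have : k + 1 ≤ k + u + 1 := by omega
  calc (k + 1) * (k + u + 1) ^ (i - k - 2 * u)
      ≤ (k + u + 1) * (k + u + 1) ^ (i - k - 2 * u) := Nat.mul_le_mul_right _ this
    _ = (k + u + 1) ^ (i - k - 2 * u) * (k + u + 1) := Nat.mul_comm _ _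

lemma QC (k i : ℕ) (h : k ≤ i) : Qaux (k + 1) i ≤ Qaux k (i + 1) := by
  by_cases h1 : k + 1 ≤ i
  · rw [Qaux, Qaux, if_pos h1, if_pos (by omega)]
    rw [Finset.sum_range_succ' (fun u => (k + u + 1) ^ (i + 1 - k - 2 * u)) ((i + 1 - k) / 2)]
    have hr : (i - (k + 1)) / 2 + 1 = (i + 1 - k) / 2 := by omega
    rw [← hr]
    refine le_trans (le_of_eq (Finset.sum_congr rfl ?_)) (Nat.le_add_right _ _)
    intro u _
    have : i - (k + 1) - 2 * u = i + 1 - k - 2 * (u + 1) := by omega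
    rw [this]
    ring_nf
  · rw [Qaux, if_neg (by omega)]
    exact Nat.zero_le _

lemma fact_le_pow' (m u : ℕ) : u.factorial ≤ (u + m + 1) ^ u := by
  induction u with
  | zero => simp
  | succ u ih =>
    rw [Nat.factorial_succ, pow_succ]
    calc (u + 1) * u.factorial ≤ (u + 1) * (u + m + 1) ^ u := Nat.mul_le_mul_left _ ih
      _ ≤ (u + 1 + m + 1) * (u + 1 + m + 1) ^ u :=
          Nat.mul_le_mul (by omega) (Nat.pow_le_pow_left (by omega) _)
      _ = (u + 1 + m + 1) ^ u * (u + 1 + m + 1) := Nat.mul_comm _ _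

lemma Qaux_le_sum (k i : ℕ) :
    (Qaux k i : ℝ) ≤ ∑ u ∈ Finset.range (i + 1), ((k : ℝ) + u + 1) ^ i / ((u.factorial : ℝ)) ^ 2 := by
  by_cases hki : k ≤ i
  · rw [Qaux, if_pos hki]
    push_cast
    refine le_trans (Finset.sum_le_sum ?_)
      (Finset.sum_le_sum_of_subset_of_nonneg (Finset.range_subset_range.mpr (by omega)) ?_)
    · intro u hu
      simp only [Finset.mem_range] at hu
      rw [le_div_iff₀ (by positivity)]
      have hnat : (k + u + 1) ^ (i - k - 2 * u) * u.factorial ^ 2 ≤ (k + u + 1) ^ i := by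
        have hf : u.factorial ≤ (k + u + 1) ^ u := by
          have := fact_le_pow' k u
          rwa [show u + k + 1 = k + u + 1 by omega] at this
        calc (k + u + 1) ^ (i - k - 2 * u) * u.factorial ^ 2
            ≤ (k + u + 1) ^ (i - k - 2 * u) * ((k + u + 1) ^ u) ^ 2 :=
              Nat.mul_le_mul_left _ (Nat.pow_le_pow_left hf 2)
          _ = (k + u + 1) ^ (i - k - 2 * u + 2 * u) := by
              rw [← pow_mul, ← pow_add, Nat.mul_comm u 2]
          _ ≤ (k + u + 1) ^ i := Nat.pow_le_pow_right (by omega) (by omega)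
      exact_mod_cast hnat
    · intro u _ _
      positivity
  · rw [Qaux_of_lt (by omega)]
    push_cast
    apply Finset.sum_nonneg
    intro u _
    positivity

/-- for every `k`, the power series `∑ S^{(k)}_i τ^i / i!` converges absolutely
for every real `τ`. -/
theorem stmt_5 (α : ℝ) (hα : 0 < α)
    (b : ℕ → ℝ) (hb : ∀ k : ℕ, b k = 1 / ((k : ℝ) + 1) + (k : ℝ) * α ^ 2)
    (S : ℕ → ℕ → ℝ)
    (hS_zero : ∀ k i : ℕ, i < k → S k i = 0)
    (hS_diag : ∀ k : ℕ, S k k = 1)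
    (hS_rec : ∀ k i : ℕ, k ≤ i →
      S k (i + 1) = α ^ 2 * (if k = 0 then 0 else S (k - 1) i) - b k * S k i + S (k + 1) i) :
    ∀ (k : ℕ) (τ : ℝ), Summable (fun i : ℕ => |S k i * τ ^ i / (i.factorial : ℝ)|) := by
  set K : ℝ := 2 * α ^ 2 + 2 with hK
  have hK1 : (1 : ℝ) ≤ K := by nlinarith [sq_nonneg α]
  have hKpos : (0 : ℝ) < K := by linarith
  clear_value K
  -- main growth bound
  have main : ∀ i k : ℕ, |S k i| ≤ K ^ i * (Qaux k i : ℝ) := by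
    intro i
    induction i with
    | zero =>
      intro k
      rcases Nat.eq_zero_or_pos k with hk | hk
      · subst hk
        rw [hS_diag 0, Qaux_self]
        simp
      · rw [hS_zero k 0 hk, abs_zero]
        positivity
    | succ i ih =>
      intro k
      rcases lt_trichotomy k (i + 1) with hk | hk | hk
      · have hki : k ≤ i := by omega
        have hQ1 : |if k = 0 then (0:ℝ) else S (k - 1) i| ≤ K ^ i * (Qaux k (i + 1) : ℝ) := by
          split_ifs with h0
          · simp only [abs_zero]
            positivity
          · refine (ih (k - 1)).trans ?_
            have hQA := QA (k - 1) i (by omega)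
            rw [show k - 1 + 1 = k by omega] at hQA
            have : (Qaux (k - 1) i : ℝ) ≤ (Qaux k (i + 1) : ℝ) := by exact_mod_cast hQA
            nlinarith [pow_pos hKpos i]
        have hbk : 0 < b k := by
          rw [hb k]
          have h1 : (0:ℝ) < 1 / ((k:ℝ) + 1) := by positivity
          have h2 : (0:ℝ) ≤ (k : ℝ) * α ^ 2 := by positivity
          linarith
        have hbk2 : b k ≤ (1 + α ^ 2) * ((k : ℝ) + 1) := by
          rw [hb k]
          have h1 : 1 / ((k:ℝ) + 1) ≤ 1 := by
            rw [div_le_one (by positivity)]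
            linarith [Nat.cast_nonneg (α := ℝ) k]
          nlinarith [Nat.cast_nonneg (α := ℝ) k, sq_nonneg α]
        have hQ2 : b k * |S k i| ≤ (1 + α ^ 2) * (K ^ i * (Qaux k (i + 1) : ℝ)) := by
          have step1 : b k * |S k i| ≤ ((1 + α ^ 2) * ((k:ℝ) + 1)) * (K ^ i * (Qaux k i : ℝ)) := by
            apply mul_le_mul hbk2 (ih k) (abs_nonneg _)
            positivity
          refine step1.trans ?_
          have hQB : ((k : ℝ) + 1) * (Qaux k i : ℝ) ≤ (Qaux k (i + 1) : ℝ) := by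
            exact_mod_cast QB k i hki
          have hpow : (0:ℝ) ≤ K ^ i := by positivity
          have h1a : (0:ℝ) ≤ 1 + α ^ 2 := by positivity
          calc ((1 + α ^ 2) * ((k:ℝ) + 1)) * (K ^ i * (Qaux k i : ℝ))
              = (1 + α ^ 2) * (K ^ i * (((k:ℝ) + 1) * (Qaux k i : ℝ))) := by ring
            _ ≤ (1 + α ^ 2) * (K ^ i * (Qaux k (i + 1) : ℝ)) :=
                mul_le_mul_of_nonneg_left (mul_le_mul_of_nonneg_left hQB hpow) h1a
        have hQ3 : |S (k + 1) i| ≤ K ^ i * (Qaux k (i + 1) : ℝ) := by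
          refine (ih (k + 1)).trans ?_
          have : (Qaux (k + 1) i : ℝ) ≤ (Qaux k (i + 1) : ℝ) := by exact_mod_cast QC k i hki
          nlinarith [pow_pos hKpos i]
        rw [hS_rec k i hki]
        have htri : |α ^ 2 * (if k = 0 then (0:ℝ) else S (k - 1) i) - b k * S k i + S (k + 1) i|
            ≤ α ^ 2 * |if k = 0 then (0:ℝ) else S (k - 1) i| + b k * |S k i| + |S (k + 1) i| := by
          calc |α ^ 2 * (if k = 0 then (0:ℝ) else S (k - 1) i) - b k * S k i + S (k + 1) i|
              ≤ |α ^ 2 * (if k = 0 then (0:ℝ) else S (k - 1) i) - b k * S k i| + |S (k + 1) i| :=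
                abs_add_le _ _
            _ ≤ |α ^ 2 * (if k = 0 then (0:ℝ) else S (k - 1) i)| + |b k * S k i|
                + |S (k + 1) i| := by
                linarith [abs_sub (α ^ 2 * (if k = 0 then (0:ℝ) else S (k - 1) i)) (b k * S k i)]
            _ = α ^ 2 * |if k = 0 then (0:ℝ) else S (k - 1) i| + b k * |S k i| + |S (k + 1) i| := by
                rw [abs_mul, abs_mul, abs_of_nonneg (by positivity : (0:ℝ) ≤ α ^ 2),
                  abs_of_pos hbk]
        refine htri.trans ?_
        have hsq : (0:ℝ) ≤ α ^ 2 := by positivity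
        calc α ^ 2 * |if k = 0 then (0:ℝ) else S (k - 1) i| + b k * |S k i| + |S (k + 1) i|
            ≤ α ^ 2 * (K ^ i * (Qaux k (i + 1) : ℝ))
              + (1 + α ^ 2) * (K ^ i * (Qaux k (i + 1) : ℝ))
              + K ^ i * (Qaux k (i + 1) : ℝ) := by
              have := mul_le_mul_of_nonneg_left hQ1 hsq
              linarith
          _ = K ^ (i + 1) * (Qaux k (i + 1) : ℝ) := by rw [pow_succ, hK]; ring
      · subst hk
        rw [hS_diag, Qaux_self]
        simp only [Nat.cast_one, mul_one, abs_one]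
        exact one_le_pow₀ hK1
      · rw [hS_zero k (i + 1) hk, abs_zero, Qaux_of_lt hk]
        simp
  intro k τ
  set c : ℝ := K * |τ| with hc
  have hc0 : 0 ≤ c := by positivity
  clear_value c
  -- pointwise bound by a finite sum
  have hbound : ∀ i : ℕ, |S k i * τ ^ i / (i.factorial : ℝ)|
      ≤ ∑ u ∈ Finset.range (i + 1),
          (c * ((k : ℝ) + u + 1)) ^ i / (i.factorial : ℝ) * (1 / ((u.factorial : ℝ)) ^ 2) := by
    intro i
    have hfac : (0:ℝ) < (i.factorial : ℝ) := by exact_mod_cast i.factorial_pos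
    have h0 : |S k i * τ ^ i / (i.factorial : ℝ)| = |S k i| * |τ| ^ i / (i.factorial : ℝ) := by
      rw [abs_div, abs_mul, abs_pow, Nat.abs_cast]
    rw [h0]
    have h1 : |S k i| * |τ| ^ i / (i.factorial : ℝ)
        ≤ (K ^ i * (Qaux k i : ℝ)) * |τ| ^ i / (i.factorial : ℝ) := by
      gcongr
      exact main i k
    refine h1.trans ?_
    have h2 : (K ^ i * (Qaux k i : ℝ)) * |τ| ^ i / (i.factorial : ℝ)
        = c ^ i / (i.factorial : ℝ) * (Qaux k i : ℝ) := by
      rw [hc, mul_pow]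
      ring
    rw [h2]
    have h3 : c ^ i / (i.factorial : ℝ) * (Qaux k i : ℝ)
        ≤ c ^ i / (i.factorial : ℝ)
          * ∑ u ∈ Finset.range (i + 1), ((k : ℝ) + u + 1) ^ i / ((u.factorial : ℝ)) ^ 2 :=
      mul_le_mul_of_nonneg_left (Qaux_le_sum k i) (by positivity)
    refine h3.trans (le_of_eq ?_)
    rw [Finset.mul_sum]
    refine Finset.sum_congr rfl fun u _ => ?_
    rw [mul_pow]
    ring
  -- summability of the dominating double family
  have hGsum : Summable (fun q : ℕ × ℕ =>
      (c * ((k : ℝ) + q.1 + 1)) ^ q.2 / (q.2.factorial : ℝ) * (1 / ((q.1.factorial : ℝ)) ^ 2)) := by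
    have heval : ∀ u : ℕ, ∑' i : ℕ,
          (c * ((k : ℝ) + u + 1)) ^ i / (i.factorial : ℝ) * (1 / ((u.factorial : ℝ)) ^ 2)
          = Real.exp (c * ((k : ℝ) + u + 1)) * (1 / ((u.factorial : ℝ)) ^ 2) := by
      intro u
      rw [tsum_mul_right]
      congr 1
      rw [Real.exp_eq_exp_ℝ, NormedSpace.exp_eq_tsum_div]
    refine (summable_prod_of_nonneg ?_).mpr ⟨?_, ?_⟩
    · intro q
      have : (0:ℝ) ≤ c * ((k : ℝ) + q.1 + 1) := by positivity
      positivity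
    · intro u
      exact (Real.summable_pow_div_factorial
        (c * ((k : ℝ) + u + 1))).mul_right (1 / ((u.factorial : ℝ)) ^ 2)
    · apply Summable.of_nonneg_of_le (f := fun u : ℕ =>
        Real.exp (c * ((k : ℝ) + 1)) * ((Real.exp c) ^ u / (u.factorial : ℝ)))
      · intro u
        simp only [heval u]
        positivity
      · intro u
        simp only [heval u]
        have h1 : Real.exp (c * ((k : ℝ) + u + 1))
            = Real.exp (c * ((k : ℝ) + 1)) * (Real.exp c) ^ u := by
          rw [← Real.exp_nat_mul, ← Real.exp_add]
          ring_nf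
        rw [h1]
        have h2 : (1 : ℝ) / ((u.factorial : ℝ)) ^ 2 ≤ 1 / (u.factorial : ℝ) := by
          apply one_div_le_one_div_of_le
          · exact_mod_cast u.factorial_pos
          · have h3 : (1:ℝ) ≤ (u.factorial : ℝ) := by exact_mod_cast u.factorial_pos
            nlinarith
        have h4 : (0:ℝ) ≤ Real.exp (c * ((k : ℝ) + 1)) * (Real.exp c) ^ u := by positivity
        calc Real.exp (c * ((k : ℝ) + 1)) * (Real.exp c) ^ u * (1 / ((u.factorial : ℝ)) ^ 2)
            ≤ Real.exp (c * ((k : ℝ) + 1)) * (Real.exp c) ^ u * (1 / (u.factorial : ℝ)) :=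
              mul_le_mul_of_nonneg_left h2 h4
          _ = Real.exp (c * ((k : ℝ) + 1)) * ((Real.exp c) ^ u / (u.factorial : ℝ)) := by ring
      · exact (Real.summable_pow_div_factorial (Real.exp c)).mul_left
          (Real.exp (c * ((k : ℝ) + 1)))
  -- truncated version
  have hFnn : ∀ p : ℕ × ℕ, (0:ℝ) ≤ if p.2 ≤ p.1 then
      (c * ((k : ℝ) + p.2 + 1)) ^ p.1 / (p.1.factorial : ℝ) * (1 / ((p.2.factorial : ℝ)) ^ 2)
      else 0 := by
    intro p
    split_ifs
    · have : (0:ℝ) ≤ c * ((k : ℝ) + p.2 + 1) := by positivity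
      positivity
    · exact le_refl 0
  have hFsum : Summable (fun p : ℕ × ℕ => if p.2 ≤ p.1 then
      (c * ((k : ℝ) + p.2 + 1)) ^ p.1 / (p.1.factorial : ℝ) * (1 / ((p.2.factorial : ℝ)) ^ 2)
      else 0) := by
    have hswap : Summable (fun p : ℕ × ℕ =>
        (c * ((k : ℝ) + p.2 + 1)) ^ p.1 / (p.1.factorial : ℝ)
          * (1 / ((p.2.factorial : ℝ)) ^ 2)) := hGsum.prod_symm
    refine Summable.of_nonneg_of_le hFnn (fun p => ?_) hswap
    split_ifs
    · exact le_refl _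
    · have : (0:ℝ) ≤ c * ((k : ℝ) + p.2 + 1) := by positivity
      positivity
  have hsum2 := ((summable_prod_of_nonneg hFnn).mp hFsum).2
  have heq : ∀ i : ℕ, ∑ u ∈ Finset.range (i + 1),
      (c * ((k : ℝ) + u + 1)) ^ i / (i.factorial : ℝ) * (1 / ((u.factorial : ℝ)) ^ 2)
      = ∑' u : ℕ, (if u ≤ i then
        (c * ((k : ℝ) + u + 1)) ^ i / (i.factorial : ℝ) * (1 / ((u.factorial : ℝ)) ^ 2) else 0) := by
    intro i
    rw [tsum_eq_sum (s := Finset.range (i + 1))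
      (fun u hu => if_neg (by simp only [Finset.mem_range] at hu; omega))]
    refine Finset.sum_congr rfl fun u hu => ?_
    rw [if_pos (by simp only [Finset.mem_range] at hu; omega)]
  refine Summable.of_nonneg_of_le (fun i => abs_nonneg _)
    (fun i => (hbound i).trans (le_of_eq (heq i))) ?_
  exact hsum2
end

section
/- For all h, k ∈ ℕ one has p_{k+2h,k} = d_k · T_{h,k}. Consequently, the transient distribution of the embedded chain is: p_{n,k} = d_k · T_{(n−k)/2,k} whenever 0 ≤ k ≤ n and n + k is even, and p_{n,k} = 0 otherwise. -/
/-- `p_{k+2h,k} = d_k T_{h,k}`; consequently the transient distribution of the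
embedded chain is `p_{n,k} = d_k T_{(n−k)/2,k}` for `k ≤ n` with `n + k` even, and `0` otherwise. -/
theorem stmt_11 (lam mu : ℕ → ℝ)
    (hlam : ∀ k : ℕ, 0 < lam k) (hmu0 : mu 0 = 0) (hmu : ∀ k : ℕ, 1 ≤ k → 0 < mu k)
    (a : ℕ → ℝ) (ha : ∀ k : ℕ, a k = lam k / (lam k + mu k))
    (d : ℕ → ℝ) (hd : ∀ k : ℕ, d k = ∏ i ∈ Finset.range k, a i)
    (p : ℕ → ℕ → ℝ)
    (hp00 : p 0 0 = 1) (hp0 : ∀ k : ℕ, 1 ≤ k → p 0 k = 0)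
    (hrec0 : ∀ n : ℕ, p (n + 1) 0 = (1 - a 1) * p n 1)
    (hreck : ∀ n k : ℕ, 1 ≤ k →
      p (n + 1) k = a (k - 1) * p n (k - 1) + (1 - a (k + 1)) * p n (k + 1))
    (T : ℕ → ℕ → ℝ)
    (hT0 : ∀ k : ℕ, T 0 k = 1)
    (hTrec : ∀ h k : ℕ, T (h + 1) k =
      ∑ l ∈ Finset.range (k + 1), a l * (1 - a (l + 1)) * T h (l + 1)) :
    (∀ h k : ℕ, p (k + 2 * h) k = d k * T h k) ∧
    (∀ n k : ℕ, k ≤ n → Even (n + k) → p n k = d k * T ((n - k) / 2) k) ∧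
    (∀ n k : ℕ, ¬(k ≤ n ∧ Even (n + k)) → p n k = 0) := by
  -- vanishing lemma: p n k = 0 when n < k or n + k is odd
  have hzero : ∀ n k : ℕ, n < k ∨ (n + k) % 2 = 1 → p n k = 0 := by
    intro n
    induction n with
    | zero =>
      intro k hk
      exact hp0 k (by omega)
    | succ n ih =>
      intro k hk
      rcases Nat.eq_zero_or_pos k with rfl | hk1
      · rw [hrec0, ih 1 (by omega)]
        ring
      · have h1 : p n (k - 1) = 0 := ih _ (by omega)
        have h2 : p n (k + 1) = 0 := ih _ (by omega)
        rw [hreck n k hk1, h1, h2]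
        ring
  have hdsucc : ∀ k, d (k + 1) = d k * a k := by
    intro k
    rw [hd, hd, Finset.prod_range_succ]
  have hmain : ∀ h k : ℕ, p (k + 2 * h) k = d k * T h k := by
    intro h
    induction h with
    | zero =>
      intro k
      induction k with
      | zero =>
        simp [hp00, hd, hT0]
      | succ k ihk =>
        have h2 : p k (k + 2) = 0 := hzero k (k + 2) (Or.inl (by omega))
        have hr := hreck k (k + 1) (by omega)
        simp only [Nat.add_sub_cancel, show k + 1 + 1 = k + 2 from rfl] at hr
        rw [show k + 1 + 2 * 0 = k + 1 by ring, hr, h2]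
        rw [show k + 2 * 0 = k by ring] at ihk
        rw [ihk, hT0, hT0, hdsucc]
        ring
    | succ h ihh =>
      intro k
      induction k with
      | zero =>
        have h1 : p (1 + 2 * h) 1 = d 1 * T h 1 := ihh 1
        rw [show (0 : ℕ) + 2 * (h + 1) = (1 + 2 * h) + 1 by ring, hrec0, h1]
        rw [hTrec, Finset.sum_range_one, hd 0, hd 1, Finset.prod_range_one,
          Finset.prod_range_zero]
        ring
      | succ k ihk =>
        have hr := hreck (k + 2 * (h + 1)) (k + 1) (by omega)
        simp only [Nat.add_sub_cancel, show k + 1 + 1 = k + 2 from rfl] at hr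
        have h2 : p (k + 2 * (h + 1)) (k + 2) = d (k + 2) * T h (k + 2) := by
          rw [show k + 2 * (h + 1) = (k + 2) + 2 * h by ring]
          exact ihh (k + 2)
        rw [show k + 1 + 2 * (h + 1) = (k + 2 * (h + 1)) + 1 by ring, hr, h2, ihk]
        have eT : T (h + 1) (k + 1)
            = T (h + 1) k + a (k + 1) * (1 - a (k + 2)) * T h (k + 2) := by
          rw [hTrec, hTrec, Finset.sum_range_succ]
        rw [eT, hdsucc (k + 1), hdsucc k]
        ring
  refine ⟨hmain, ?_, ?_⟩
  · intro n k hkn heven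
    have := hmain ((n - k) / 2) k
    rwa [show k + 2 * ((n - k) / 2) = n by
      rcases heven with ⟨m, hm⟩; omega] at this
  · intro n k hnk
    apply hzero
    simp only [Nat.even_iff] at hnk
    omega
end

section
/- For every h ∈ ℕ and every k ≥ 1 one has α_{k−1} · p_{k+2h+1,k−1} = d_k · Σ_{i=0}^{k−1} α_i·(1−α_{i+1})·T_{h,i+1} (equivalently, = d_k · Σ_{i=0}^{k−1} ((d_{i+1}−d_{i+2})/d_i)·T_{h,i+1}), while for k = 0 the corresponding quantity p_{2h+1,−1} is 0. -/
/-! The distribution satisfies `p (k + 2h) k = d k * T h k`, by induction on `h` and then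
on `k`: the forward recurrence for `p` matches the fact that `T (h+1) (k+1) - T (h+1) k` is
a single term of the partial sum defining `T (h+1)`. For `k = m + 1` the left side is then
`a m * d m * T (h+1) m = d (m+1) * T (h+1) m`, and `T (h+1) m` is the required sum;
the second form follows since `d` does not vanish. -/

open Finset

section JumpChain

variable {R : Type*} [CommRing R] {a : ℕ → R} {p : ℕ → ℕ → R}

theorem jumpChain_eq_zero_of_lt (hp0 : ∀ k, 1 ≤ k → p 0 k = 0)
    (hreck : ∀ n k, 1 ≤ k →
      p (n + 1) k = a (k - 1) * p n (k - 1) + (1 - a (k + 1)) * p n (k + 1)) :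
    ∀ {n k : ℕ}, n < k → p n k = 0 := by
  intro n
  induction n with
  | zero => exact fun hk => hp0 _ hk
  | succ n ih =>
    intro k hk
    rw [hreck n k (by omega), ih (by omega), ih (by omega)]
    ring

theorem jumpChain_diag (hp00 : p 0 0 = 1) (hp0 : ∀ k, 1 ≤ k → p 0 k = 0)
    (hreck : ∀ n k, 1 ≤ k →
      p (n + 1) k = a (k - 1) * p n (k - 1) + (1 - a (k + 1)) * p n (k + 1))
    (k : ℕ) : p k k = ∏ i ∈ range k, a i := by
  induction k with
  | zero => simpa using hp00
  | succ k ih =>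
    rw [hreck k (k + 1) (by omega), Nat.add_sub_cancel, ih,
      jumpChain_eq_zero_of_lt hp0 hreck (by omega), prod_range_succ]
    ring

theorem jumpChain_add_two_mul (T : ℕ → ℕ → R) (hp00 : p 0 0 = 1)
    (hp0 : ∀ k, 1 ≤ k → p 0 k = 0) (hrec0 : ∀ n, p (n + 1) 0 = (1 - a 1) * p n 1)
    (hreck : ∀ n k, 1 ≤ k →
      p (n + 1) k = a (k - 1) * p n (k - 1) + (1 - a (k + 1)) * p n (k + 1))
    (hT0 : ∀ k, T 0 k = 1)
    (hTrec : ∀ h k, T (h + 1) k = ∑ l ∈ range (k + 1), a l * (1 - a (l + 1)) * T h (l + 1)) :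
    ∀ h k, p (k + 2 * h) k = (∏ i ∈ range k, a i) * T h k := by
  intro h
  induction h with
  | zero => intro k; simp [jumpChain_diag hp00 hp0 hreck, hT0]
  | succ h ihh =>
    have hT_succ : ∀ k, T (h + 1) (k + 1) =
        T (h + 1) k + a (k + 1) * (1 - a (k + 2)) * T h (k + 2) := fun k => by
      rw [hTrec h (k + 1), hTrec h k, sum_range_succ]
    intro k
    induction k with
    | zero =>
      rw [show 0 + 2 * (h + 1) = (1 + 2 * h) + 1 by ring, hrec0, ihh 1, hTrec]
      simp only [zero_add, sum_range_one, prod_range_one, prod_range_zero]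
      ring
    | succ k ihk =>
      rw [show k + 1 + 2 * (h + 1) = k + 2 * (h + 1) + 1 by ring, hreck _ _ (by omega),
        Nat.add_sub_cancel, ihk, show k + 2 * (h + 1) = (k + 2) + 2 * h by ring, ihh,
        hT_succ, prod_range_succ, prod_range_succ]
      ring

end JumpChain

theorem prod_range_succ_sub_prod_range_succ_succ_div {K : Type*} [Field K] (a : ℕ → K) (i : ℕ)
    (hi : ∏ j ∈ range i, a j ≠ 0) :
    ((∏ j ∈ range (i + 1), a j) - ∏ j ∈ range (i + 2), a j) / ∏ j ∈ range i, a j =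
      a i * (1 - a (i + 1)) := by
  rw [prod_range_succ, prod_range_succ, prod_range_succ]
  field_simp

/-- for `h ∈ ℕ` and `k ≥ 1`,
`α_{k−1} p_{k+2h+1,k−1} = d_k ∑_{i=0}^{k−1} α_i (1−α_{i+1}) T_{h,i+1}`,
equivalently `= d_k ∑_{i=0}^{k−1} ((d_{i+1}−d_{i+2})/d_i) T_{h,i+1}`.
(For `k = 0` the corresponding quantity `p_{2h+1,−1}` is `0` by convention; with ℕ-valued
state indices this is the empty case.) -/
theorem stmt_12 (lam mu : ℕ → ℝ)
    (hlam : ∀ k : ℕ, 0 < lam k) (hmu0 : mu 0 = 0) (hmu : ∀ k : ℕ, 1 ≤ k → 0 < mu k)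
    (a : ℕ → ℝ) (ha : ∀ k : ℕ, a k = lam k / (lam k + mu k))
    (d : ℕ → ℝ) (hd : ∀ k : ℕ, d k = ∏ i ∈ Finset.range k, a i)
    (p : ℕ → ℕ → ℝ)
    (hp00 : p 0 0 = 1) (hp0 : ∀ k : ℕ, 1 ≤ k → p 0 k = 0)
    (hrec0 : ∀ n : ℕ, p (n + 1) 0 = (1 - a 1) * p n 1)
    (hreck : ∀ n k : ℕ, 1 ≤ k →
      p (n + 1) k = a (k - 1) * p n (k - 1) + (1 - a (k + 1)) * p n (k + 1))
    (T : ℕ → ℕ → ℝ)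
    (hT0 : ∀ k : ℕ, T 0 k = 1)
    (hTrec : ∀ h k : ℕ, T (h + 1) k =
      ∑ l ∈ Finset.range (k + 1), a l * (1 - a (l + 1)) * T h (l + 1)) :
    ∀ h k : ℕ, 1 ≤ k →
      a (k - 1) * p (k + 2 * h + 1) (k - 1) =
        d k * ∑ i ∈ Finset.range k, a i * (1 - a (i + 1)) * T h (i + 1) ∧
      a (k - 1) * p (k + 2 * h + 1) (k - 1) =
        d k * ∑ i ∈ Finset.range k, ((d (i + 1) - d (i + 2)) / d i) * T h (i + 1) := by
  intro h k hk
  obtain ⟨m, rfl⟩ := Nat.exists_eq_add_of_le' hk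
  have ha_pos : ∀ i, 0 < a i := fun i => by
    have hmu_nonneg : 0 ≤ mu i := by
      rcases Nat.eq_zero_or_pos i with rfl | hi
      exacts [hmu0.ge, (hmu i hi).le]
    rw [ha]
    exact div_pos (hlam i) (by linarith [hlam i])
  have key : a m * p (m + 1 + 2 * h + 1) m =
      d (m + 1) * ∑ i ∈ range (m + 1), a i * (1 - a (i + 1)) * T h (i + 1) := by
    rw [show m + 1 + 2 * h + 1 = m + 2 * (h + 1) by ring,
      jumpChain_add_two_mul T hp00 hp0 hrec0 hreck hT0 hTrec, hTrec, hd, prod_range_succ]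
    ring
  refine ⟨key, key.trans ?_⟩
  congr 1
  refine sum_congr rfl fun i _ => ?_
  rw [hd, hd, hd, prod_range_succ_sub_prod_range_succ_succ_div a i
    (prod_pos fun j _ => ha_pos j).ne']
end

section
/- Let λ, μ > 0 and specialize the rates to the discouragement queue: λ_k = λ/(1+k) for k ≥ 0 and μ_k = μ·k for k ≥ 0 (so μ_0 = 0). Then α_i = λ_i/(λ_i+μ_i) = 1/(1 + i(i+1)·(μ/λ)), and the transient distribution of the embedded chain is: p_{n,k} = d_k · T_{(n−k)/2,k} whenever 0 ≤ k ≤ n and n + k is even, and p_{n,k} = 0 otherwise, where d_k = Π_{i=0}^{k−1} 1/(1 + i(i+1)·(μ/λ)). -/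
/-!
Mass can only sit at states `k ≤ n` with `n + k` even, since every step moves the chain by one.
On the reachable states write `n = k + 2m`. The diagonal `p_{k,k}` is the probability of `k`
straight births, i.e. `d_k`. Off the diagonal, `p_{k+2m,k}` follows from its two predecessors
`p_{k-1+2m,k-1}` and `p_{k+1+2(m-1),k+1}`, and `T_{m,k}` satisfies the same recursion once the
factor `d_k` is taken out: peeling the last summand off the sum defining `T_{m,k}` gives
`T_{m,k} = T_{m,k-1} + α_k (1 - α_{k+1}) T_{m-1,k+1}`, with `d_{k+1} = d_k α_k`.
-/

open Finset

lemma discouragement_birth_prob {lambda mu : ℝ} (hlambda : 0 < lambda) (hmu : 0 ≤ mu) (i : ℕ) :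
    lambda / (1 + i) / (lambda / (1 + i) + mu * i) = 1 / (1 + i * (i + 1) * (mu / lambda)) := by
  have : lambda / (1 + i) + mu * i ≠ 0 := by positivity
  field_simp
  ring

structure IsJumpChainLaw (a : ℕ → ℝ) (p : ℕ → ℕ → ℝ) : Prop where
  zero_zero : p 0 0 = 1
  zero_of_pos : ∀ k, 1 ≤ k → p 0 k = 0
  succ_zero : ∀ n, p (n + 1) 0 = (1 - a 1) * p n 1
  succ_of_pos : ∀ n k, 1 ≤ k → p (n + 1) k = a (k - 1) * p n (k - 1) + (1 - a (k + 1)) * p n (k + 1)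

namespace IsJumpChainLaw

variable {a : ℕ → ℝ} {p : ℕ → ℕ → ℝ}

lemma succ_succ (hp : IsJumpChainLaw a p) (n k : ℕ) :
    p (n + 1) (k + 1) = a k * p n k + (1 - a (k + 2)) * p n (k + 2) :=
  hp.succ_of_pos n (k + 1) k.succ_pos

lemma eq_zero_of_not_reachable (hp : IsJumpChainLaw a p) {n k : ℕ}
    (h : ¬(k ≤ n ∧ Even (n + k))) : p n k = 0 := by
  induction n generalizing k with
  | zero => exact hp.zero_of_pos k (by grind)
  | succ n ih =>
    simp only [Nat.even_iff] at h ih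
    cases k with
    | zero => rw [hp.succ_zero, ih (by omega), mul_zero]
    | succ k => rw [hp.succ_succ, ih (by omega), ih (by omega), mul_zero, mul_zero, add_zero]

lemma diag (hp : IsJumpChainLaw a p) (k : ℕ) : p k k = ∏ i ∈ range k, a i := by
  induction k with
  | zero => simpa using hp.zero_zero
  | succ k ih =>
    rw [hp.succ_succ, ih, hp.eq_zero_of_not_reachable (by omega), prod_range_succ]
    ring

lemma add_two_mul (hp : IsJumpChainLaw a p) {T : ℕ → ℕ → ℝ} (hT0 : ∀ k, T 0 k = 1)
    (hT : ∀ h k, T (h + 1) k = ∑ l ∈ range (k + 1), a l * (1 - a (l + 1)) * T h (l + 1))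
    (m k : ℕ) : p (k + 2 * m) k = (∏ i ∈ range k, a i) * T m k := by
  induction m generalizing k with
  | zero => rw [hT0, mul_one]; exact hp.diag k
  | succ m ihm =>
    induction k with
    | zero =>
      have hT_zero : T (m + 1) 0 = a 0 * (1 - a 1) * T m 1 := by
        rw [hT, sum_range_one]
      rw [show 0 + 2 * (m + 1) = (1 + 2 * m) + 1 by ring, hp.succ_zero, ihm, hT_zero]
      simp only [prod_range_one, prod_range_zero]
      ring
    | succ j ihk =>
      have hT_succ : T (m + 1) (j + 1) = T (m + 1) j + a (j + 1) * (1 - a (j + 2)) * T m (j + 2) := by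
        rw [hT m (j + 1), hT m j, sum_range_succ]
      rw [show j + 1 + 2 * (m + 1) = (j + 2 * (m + 1)) + 1 by ring, hp.succ_succ, ihk,
        show j + 2 * (m + 1) = (j + 2) + 2 * m by ring, ihm, hT_succ,
        prod_range_succ, prod_range_succ]
      ring

end IsJumpChainLaw

/-- the discouragement queue `λ_k = λ/(1+k)`, `μ_k = μ·k`. Then
`α_i = 1/(1 + i(i+1)(μ/λ))` and the transient distribution of the embedded chain is
`p_{n,k} = d_k T_{(n−k)/2,k}` for `k ≤ n` with `n + k` even, `0` otherwise, where
`d_k = ∏_{i=0}^{k−1} 1/(1 + i(i+1)(μ/λ))`. -/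
theorem stmt_13 (lambda mu : ℝ) (hlambda : 0 < lambda) (hmu : 0 < mu)
    (lamSeq muSeq : ℕ → ℝ)
    (hlamSeq : ∀ k : ℕ, lamSeq k = lambda / (1 + (k : ℝ)))
    (hmuSeq : ∀ k : ℕ, muSeq k = mu * (k : ℝ))
    (a : ℕ → ℝ) (ha : ∀ k : ℕ, a k = lamSeq k / (lamSeq k + muSeq k))
    (d : ℕ → ℝ) (hd : ∀ k : ℕ, d k = ∏ i ∈ Finset.range k, a i)
    (p : ℕ → ℕ → ℝ)
    (hp00 : p 0 0 = 1) (hp0 : ∀ k : ℕ, 1 ≤ k → p 0 k = 0)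
    (hrec0 : ∀ n : ℕ, p (n + 1) 0 = (1 - a 1) * p n 1)
    (hreck : ∀ n k : ℕ, 1 ≤ k →
      p (n + 1) k = a (k - 1) * p n (k - 1) + (1 - a (k + 1)) * p n (k + 1))
    (T : ℕ → ℕ → ℝ)
    (hT0 : ∀ k : ℕ, T 0 k = 1)
    (hTrec : ∀ h k : ℕ, T (h + 1) k =
      ∑ l ∈ Finset.range (k + 1), a l * (1 - a (l + 1)) * T h (l + 1)) :
    (∀ i : ℕ, a i = 1 / (1 + (i : ℝ) * ((i : ℝ) + 1) * (mu / lambda))) ∧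
    (∀ k : ℕ, d k = ∏ i ∈ Finset.range k, 1 / (1 + (i : ℝ) * ((i : ℝ) + 1) * (mu / lambda))) ∧
    (∀ n k : ℕ, k ≤ n → Even (n + k) → p n k = d k * T ((n - k) / 2) k) ∧
    (∀ n k : ℕ, ¬(k ≤ n ∧ Even (n + k)) → p n k = 0) := by
  have ha' (i : ℕ) : a i = 1 / (1 + (i : ℝ) * ((i : ℝ) + 1) * (mu / lambda)) := by
    rw [ha, hlamSeq, hmuSeq]
    exact discouragement_birth_prob hlambda hmu.le i
  have hp : IsJumpChainLaw a p := ⟨hp00, hp0, hrec0, hreck⟩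
  refine ⟨ha', fun k => by simp only [hd, ha'], ?_, fun n k => hp.eq_zero_of_not_reachable⟩
  intro n k hkn ⟨r, hr⟩
  obtain ⟨m, rfl⟩ : ∃ m, n = k + 2 * m := ⟨r - k, by omega⟩
  rw [hd, Nat.add_sub_cancel_left, Nat.mul_div_cancel_left m two_pos]
  exact hp.add_two_mul hT0 hTrec m k
end
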